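/- arXiv:2407.15619 — 6 statements merged into one kernel-verified Lean document; each statement's English description precedes it below -/
import Mathlib

section
/- For 0 < ν ≤ 1, the pmf of the Poisson random field on ℝ²₊ with parameter λ > 0, given by p(k,t₁,t₂) = e^(−λt₁t₂)(λt₁t₂)^k / k! for k ≥ 0 (with p(−1,·,·) = 0), satisfies the system of partial differential equations ∂²p(k,t₁,t₂)/∂t₁∂t₂ = λ(k+1)p(k+1,t₁,t₂) − λ(2k+1)p(k,t₁,t₂) + λk·p(k−1,t₁,t₂). -/
open Real Nat

private noncomputable def d1 (k : ℕ) (x : ℝ) : ℝ :=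
  Real.exp (-x) * ((k : ℝ) * x ^ (k - 1) - x ^ k) / k !

private noncomputable def d2 (k : ℕ) (x : ℝ) : ℝ :=
  Real.exp (-x) *
    ((k : ℝ) * ((k - 1 : ℕ) * x ^ (k - 1 - 1)) - (k : ℝ) * x ^ (k - 1)
      - ((k : ℝ) * x ^ (k - 1) - x ^ k)) / k !

private lemma hg (k : ℕ) (x : ℝ) :
    HasDerivAt (fun y : ℝ => Real.exp (-y) * y ^ k / k !) (d1 k x) x := by
  have h1 : HasDerivAt (fun y : ℝ => Real.exp (-y)) (-Real.exp (-x)) x := by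
    simpa using ((hasDerivAt_id x).neg.exp)
  have h2 := hasDerivAt_pow k x
  have := (h1.mul h2).div_const ((k ! : ℝ))
  refine this.congr_deriv ?_
  unfold d1
  ring

private lemma hg' (k : ℕ) (x : ℝ) :
    HasDerivAt (d1 k) (d2 k x) x := by
  have h1 : HasDerivAt (fun y : ℝ => Real.exp (-y)) (-Real.exp (-x)) x := by
    simpa using ((hasDerivAt_id x).neg.exp)
  have h2 := ((hasDerivAt_pow (k - 1) x).const_mul (k : ℝ)).sub (hasDerivAt_pow k x)
  have := (h1.mul h2).div_const ((k ! : ℝ))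
  refine this.congr_deriv ?_
  unfold d2
  push_cast [Pi.sub_apply]
  ring

/-- The pmf `p(k,t₁,t₂) = e^(−λt₁t₂)(λt₁t₂)^k/k!` of the Poisson random field on `ℝ²₊`
with parameter `λ > 0` satisfies
`∂²p(k)/∂t₁∂t₂ = λ(k+1)p(k+1) − λ(2k+1)p(k) + λk p(k−1)` (with `p(−1) = 0`). -/
theorem prf_pmf_pde (lam : ℝ) (hlam : 0 < lam)
    (p : ℕ → ℝ → ℝ → ℝ)
    (hp : ∀ k t₁ t₂, p k t₁ t₂ = Real.exp (-(lam * t₁ * t₂)) * (lam * t₁ * t₂) ^ k / k !)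
    (k : ℕ) (t₁ t₂ : ℝ) (ht₁ : 0 ≤ t₁) (ht₂ : 0 ≤ t₂) :
    deriv (fun s => deriv (fun u => p k s u) t₂) t₁
      = lam * (k + 1) * p (k + 1) t₁ t₂ - lam * (2 * k + 1) * p k t₁ t₂
          + lam * k * p (k - 1) t₁ t₂ := by
  -- inner derivative
  have hinner : ∀ s : ℝ, deriv (fun u => p k s u) t₂ = d1 k (lam * s * t₂) * (lam * s) := by
    intro s
    have hc : HasDerivAt (fun u : ℝ => lam * s * u) (lam * s) t₂ := by
      simpa using (hasDerivAt_id t₂).const_mul (lam * s)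
    have h := (hg k (lam * s * t₂)).comp t₂ hc
    have heq : (fun u => p k s u) =
        (fun u : ℝ => Real.exp (-(lam * s * u)) * (lam * s * u) ^ k / k !) := by
      funext u; exact hp k s u
    rw [heq]
    exact h.deriv
  rw [funext hinner]
  -- outer derivative
  have hc' : HasDerivAt (fun s : ℝ => lam * s * t₂) (lam * t₂) t₁ := by
    simpa using ((hasDerivAt_id t₁).const_mul lam).mul_const t₂
  have hm : HasDerivAt (fun s : ℝ => lam * s) lam t₁ := by
    simpa using (hasDerivAt_id t₁).const_mul lam
  have h := (((hg' k (lam * t₁ * t₂)).comp t₁ hc').mul hm)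
  simp only [Function.comp_def, Pi.mul_def] at h
  rw [h.deriv]
  -- final algebra
  simp only [hp]
  set x := lam * t₁ * t₂ with hx
  have hfac : (k ! : ℝ) ≠ 0 := by positivity
  match k with
  | 0 =>
    unfold d1 d2
    norm_num [Nat.factorial]
    ring
  | 1 =>
    unfold d1 d2
    norm_num [Nat.factorial]
    ring
  | (n + 2) =>
    unfold d1 d2
    have hfac' : ((n + 1)! : ℝ) ≠ 0 := by positivity
    have hfac'' : ((n)! : ℝ) ≠ 0 := by positivity
    simp only [Nat.add_sub_cancel, Nat.succ_sub_one, Nat.factorial_succ]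
    push_cast
    field_simp
    ring
end

section
/- The k-th derivative of the generalized Mittag-Leffler function satisfies d^k/dx^k E_{α,β}^γ(x) = (γ)_k · E_{α, β+kα}^{γ+k}(x) for all k ≥ 0, α > 0, β > 0, γ > 0, where (γ)_k is the rising factorial. -/
open Real Nat

section aux

open Filter

private lemma Gamma_interp' {y z θ : ℝ} (hy : 0 < y) (hz : 0 < z) (hθ0 : 0 ≤ θ) (hθ1 : θ ≤ 1) :
    Gamma (θ * y + (1 - θ) * z) ≤ Gamma y ^ θ * Gamma z ^ (1 - θ) := by
  have h := convexOn_log_Gamma.2 (Set.mem_Ioi.2 hy) (Set.mem_Ioi.2 hz) hθ0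
    (by linarith : (0:ℝ) ≤ 1 - θ) (by ring)
  simp only [Function.comp, smul_eq_mul] at h
  have hmem : 0 < θ * y + (1 - θ) * z := by
    rcases eq_or_lt_of_le hθ0 with h0 | h0
    · rw [← h0]; simpa using hz
    rcases eq_or_lt_of_le hθ1 with h1 | h1
    · rw [h1]; simpa using hy
    have h2 : (0:ℝ) < 1 - θ := by linarith
    exact add_pos (mul_pos h0 hy) (mul_pos h2 hz)
  have key : Gamma y ^ θ * Gamma z ^ (1 - θ)
      = exp (θ * log (Gamma y) + (1 - θ) * log (Gamma z)) := by
    rw [rpow_def_of_pos (Gamma_pos_of_pos hy), rpow_def_of_pos (Gamma_pos_of_pos hz), ← exp_add]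
    ring_nf
  rw [key, ← exp_log (Gamma_pos_of_pos hmem)]
  exact exp_le_exp.2 h

private lemma gamma_ratio_lower {α y : ℝ} (hα : 0 < α) (hy : 1 ≤ y) (hαy : α ≤ y) :
    Gamma y * (y ^ min α 1 / 2) ≤ Gamma (y + α) := by
  have hy0 : (0:ℝ) < y := by linarith
  have hΓy : 0 < Gamma y := Gamma_pos_of_pos hy0
  have hΓyα : 0 < Gamma (y + α) := Gamma_pos_of_pos (by linarith)
  have hyΓ : Gamma (y + 1) = y * Gamma y := Gamma_add_one hy0.ne'
  rcases le_or_gt 1 α with h1 | h1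
  · rw [min_eq_right h1]
    set θ := 1 / α with hθ
    have hθpos : 0 < θ := by positivity
    have hθ1 : θ ≤ 1 := by rw [hθ, div_le_one hα]; exact h1
    have h := Gamma_interp' (show (0:ℝ) < y + α by linarith) hy0 hθpos.le hθ1
    have harg : θ * (y + α) + (1 - θ) * y = y + 1 := by
      have : θ * α = 1 := by rw [hθ, one_div, inv_mul_cancel₀ hα.ne']
      linear_combination this
    rw [harg, hyΓ] at h
    have e1 : Gamma y ^ θ = Gamma y * Gamma y ^ (θ - 1) := by
      have := rpow_add hΓy 1 (θ - 1)
      rw [rpow_one] at this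
      rw [← this]; ring_nf
    have e2 : Gamma y ^ (1 - θ) * Gamma y ^ (θ - 1) = 1 := by
      rw [← rpow_add hΓy]; norm_num
    have h2 : y * Gamma y ^ θ ≤ Gamma (y + α) ^ θ := by
      calc y * Gamma y ^ θ = y * Gamma y * Gamma y ^ (θ - 1) := by rw [e1]; ring
        _ ≤ Gamma (y + α) ^ θ * Gamma y ^ (1 - θ) * Gamma y ^ (θ - 1) :=
            mul_le_mul_of_nonneg_right h (rpow_nonneg hΓy.le _)
        _ = Gamma (y + α) ^ θ := by rw [mul_assoc, e2, mul_one]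
    have h3 := rpow_le_rpow (by positivity) h2 hα.le
    have hθα : θ * α = 1 := by rw [hθ, one_div, inv_mul_cancel₀ hα.ne']
    rw [← rpow_mul hΓyα.le, hθα, rpow_one] at h3
    rw [mul_rpow hy0.le (rpow_nonneg hΓy.le _), ← rpow_mul hΓy.le, hθα, rpow_one] at h3
    have hyα2 : y ≤ y ^ α := by
      nth_rewrite 1 [← rpow_one y]
      exact rpow_le_rpow_of_exponent_le hy h1
    calc Gamma y * (y ^ (1:ℝ) / 2) ≤ y * Gamma y := by rw [rpow_one]; nlinarith
      _ ≤ y ^ α * Gamma y := by nlinarith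
      _ ≤ Gamma (y + α) := h3
  · rw [min_eq_left h1.le]
    have h := Gamma_interp' (show (0:ℝ) < y + α by linarith)
      (show (0:ℝ) < y + 1 + α by linarith) hα.le h1.le
    have harg : α * (y + α) + (1 - α) * (y + 1 + α) = y + 1 := by ring
    rw [harg, hyΓ] at h
    have hrec : Gamma (y + 1 + α) = (y + α) * Gamma (y + α) := by
      rw [show y + 1 + α = (y + α) + 1 by ring, Gamma_add_one (by positivity)]
    rw [hrec, mul_rpow (by positivity) hΓyα.le] at h
    have ecomb : Gamma (y + α) ^ α * ((y + α) ^ (1 - α) * Gamma (y + α) ^ (1 - α))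
        = Gamma (y + α) * (y + α) ^ (1 - α) := by
      rw [show Gamma (y+α) ^ α * ((y+α) ^ (1-α) * Gamma (y+α) ^ (1-α))
          = (Gamma (y+α) ^ α * Gamma (y+α) ^ (1-α)) * (y+α) ^ (1-α) by ring,
        ← rpow_add hΓyα]
      norm_num
    rw [ecomb] at h
    have hbound : y ^ α * (y + α) ^ (1 - α) ≤ 2 * y := by
      have b1 : (y + α) ^ (1 - α) ≤ (2 * y) ^ (1 - α) :=
        rpow_le_rpow (by positivity) (by linarith) (by linarith)
      have b2 : (2 * y) ^ (1 - α) = 2 ^ (1 - α) * y ^ (1 - α) :=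
        mul_rpow (by norm_num) hy0.le
      have b3 : (2:ℝ) ^ (1 - α) ≤ 2 := by
        nth_rewrite 2 [show (2:ℝ) = 2 ^ (1:ℝ) by norm_num]
        exact rpow_le_rpow_of_exponent_le one_le_two (by linarith)
      have b4 : y ^ α * y ^ (1 - α) = y := by rw [← rpow_add hy0]; norm_num
      calc y ^ α * (y + α) ^ (1 - α) ≤ y ^ α * (2 ^ (1 - α) * y ^ (1 - α)) := by
            rw [← b2]; exact mul_le_mul_of_nonneg_left b1 (rpow_nonneg hy0.le _)
        _ ≤ y ^ α * (2 * y ^ (1 - α)) := by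
            have := rpow_nonneg hy0.le α
            have := rpow_nonneg hy0.le (1 - α)
            nlinarith
        _ = 2 * (y ^ α * y ^ (1 - α)) := by ring
        _ = 2 * y := by rw [b4]
    have hpow : 0 < (y + α) ^ (1 - α) := rpow_pos_of_pos (by positivity) _
    rw [← mul_le_mul_iff_of_pos_right hpow]
    calc Gamma y * (y ^ α / 2) * (y + α) ^ (1 - α)
        = Gamma y * (y ^ α * (y + α) ^ (1 - α)) / 2 := by ring
      _ ≤ Gamma y * (2 * y) / 2 := by
          apply div_le_div_of_nonneg_right ?_ (by norm_num)
          exact mul_le_mul_of_nonneg_left hbound hΓy.le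
      _ = y * Gamma y := by ring
      _ ≤ Gamma (y + α) * (y + α) ^ (1 - α) := h

private lemma key_summable {α β γ t : ℝ} (hα : 0 < α) (hβ : 0 < β) (hγ : 0 < γ) (ht : 0 ≤ t) :
    Summable (fun n : ℕ => Gamma (γ + n) * t ^ n / (Gamma (n * α + β) * n !)) := by
  set a : ℝ := min α 1 with ha
  have ha0 : 0 < a := lt_min hα one_pos
  set M : ℝ := max 2 (max α ((4 * t * (γ + 1)) ^ a⁻¹)) with hM
  have htend : Tendsto (fun n : ℕ => (n : ℝ) * α + β) atTop atTop :=
    tendsto_atTop_add_const_right _ β (tendsto_natCast_atTop_atTop.atTop_mul_const hα)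
  apply summable_of_ratio_norm_eventually_le (r := 1/2) (by norm_num)
  filter_upwards [htend.eventually_ge_atTop M] with n hn
  set y : ℝ := (n : ℝ) * α + β with hy
  have hy2 : 2 ≤ y := le_trans (le_max_left _ _) hn
  have hy1 : 1 ≤ y := by linarith
  have hyα : α ≤ y := le_trans (le_trans (le_max_left _ _) (le_max_right _ _)) hn
  have hy0 : 0 < y := by linarith
  have hΓy : 0 < Gamma y := Gamma_pos_of_pos hy0
  have hΓyα : 0 < Gamma (y + α) := Gamma_pos_of_pos (by linarith)
  have hγn : 0 < γ + (n : ℝ) := by positivity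
  have hΓγn : 0 < Gamma (γ + n) := Gamma_pos_of_pos hγn
  have hya : 4 * t * (γ + 1) ≤ y ^ a := by
    have h1 : (4 * t * (γ + 1)) ^ a⁻¹ ≤ y :=
      le_trans (le_trans (le_max_right _ _) (le_max_right _ _)) hn
    have h2 := rpow_le_rpow (rpow_nonneg (by positivity) _) h1 ha0.le
    rwa [rpow_inv_rpow (by positivity) ha0.ne'] at h2
  have hΓ2 : 2 * t * (γ + 1) * Gamma y ≤ Gamma (y + α) := by
    have h3 := gamma_ratio_lower hα hy1 hyα
    nlinarith [mul_le_mul_of_nonneg_left hya hΓy.le]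
  have hfpos : (0:ℝ) < (n ! : ℝ) := by exact_mod_cast Nat.factorial_pos n
  have hapos : 0 ≤ Gamma (γ + n) * t ^ n / (Gamma (↑n * α + β) * ↑n !) := by positivity
  have hfrac : ((γ + ↑n) * t * Gamma y) / (((n:ℝ) + 1) * Gamma (y + α)) ≤ 1/2 := by
    rw [div_le_iff₀ (by positivity)]
    nlinarith [mul_le_mul_of_nonneg_left hΓ2 (show (0:ℝ) ≤ (n:ℝ) + 1 by positivity),
      mul_nonneg (mul_nonneg (mul_nonneg (Nat.cast_nonneg n : (0:ℝ) ≤ n) hγ.le) ht) hΓy.le]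
  have e : Gamma (γ + ↑(n+1)) * t ^ (n+1) / (Gamma (↑(n+1) * α + β) * ↑(n+1)!)
      = ((γ + ↑n) * t * Gamma y) / (((n:ℝ) + 1) * Gamma (y + α))
        * (Gamma (γ + ↑n) * t ^ n / (Gamma (↑n * α + β) * ↑n !)) := by
    rw [show (γ : ℝ) + ↑(n+1) = (γ + ↑n) + 1 by push_cast; ring, Gamma_add_one hγn.ne',
      show ((↑(n+1) : ℝ)) * α + β = y + α by push_cast [hy]; ring]
    push_cast [Nat.factorial_succ]
    rw [← hy]
    field_simp
    ring
  have hle : Gamma (γ + ↑(n+1)) * t ^ (n+1) / (Gamma (↑(n+1) * α + β) * ↑(n+1)!)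
      ≤ 1/2 * (Gamma (γ + ↑n) * t ^ n / (Gamma (↑n * α + β) * ↑n !)) := by
    rw [e]
    exact mul_le_mul_of_nonneg_right hfrac hapos
  have h1 : ‖Gamma (γ + ↑(n+1)) * t ^ (n+1) / (Gamma (↑(n+1) * α + β) * ↑(n+1)!)‖
      = Gamma (γ + ↑(n+1)) * t ^ (n+1) / (Gamma (↑(n+1) * α + β) * ↑(n+1)!) := by
    apply norm_of_nonneg
    have h0 : 0 < γ + ((n:ℝ)+1) := by positivity
    have h2 : 0 < ((n + 1 : ℕ) : ℝ) * α + β := by positivity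
    positivity
  rw [h1, norm_of_nonneg hapos]
  exact hle

end aux

/-- The generalized Mittag-Leffler function `E_{α,β}^γ(x) = ∑ (γ)_n x^n/(Γ(nα+β) n!)`,
with `(γ)_n = Γ(γ+n)/Γ(γ)` the rising factorial. -/
noncomputable def genML (a b g x : ℝ) : ℝ :=
  ∑' n : ℕ, (Gamma (g + n) / Gamma g) * x ^ n / (Gamma (n * a + b) * n !)

private lemma hasDerivAt_genML (α β γ : ℝ) (hα : 0 < α) (hβ : 0 < β) (hγ : 0 < γ)
    (x : ℝ) : HasDerivAt (genML α β γ) (γ * genML α (β + α) (γ + 1) x) x := by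
  set R : ℝ := |x| + 1 with hR
  have hR1 : (1:ℝ) ≤ R := by simp [hR]
  have hΓγ : 0 < Gamma γ := Gamma_pos_of_pos hγ
  set C : ℕ → ℝ := fun n => Gamma (γ + n) / (Gamma γ * (Gamma (n * α + β) * n !)) with hC
  have hCpos : ∀ n, 0 < C n := by
    intro n
    have h1 : 0 < γ + (n:ℝ) := by positivity
    have h2 : 0 < (n:ℝ) * α + β := by positivity
    have h3 : (0:ℝ) < (n ! : ℝ) := by exact_mod_cast Nat.factorial_pos n
    have := Gamma_pos_of_pos h1
    have := Gamma_pos_of_pos h2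
    rw [hC]
    positivity
  have hgen : ∀ β' γ', genML α β' γ' = fun z => ∑' n : ℕ,
      (Gamma (γ' + n) / (Gamma γ' * (Gamma (n * α + β') * n !))) * z ^ n := by
    intro β' γ'
    funext z
    rw [genML]
    exact tsum_congr fun n => by ring
  -- summable bound for derivatives on ball 0 R
  have hu : Summable (fun n : ℕ => C n * ((n:ℝ) * R ^ (n - 1))) := by
    rw [← summable_nat_add_iff 1]
    have hks := (key_summable hα (by linarith : (0:ℝ) < β + α) (by linarith : (0:ℝ) < γ + 1)
      (by linarith : (0:ℝ) ≤ R)).mul_left (1 / Gamma γ)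
    refine hks.congr fun n => ?_
    have hfs : ((n+1)! : ℝ) = ((n:ℝ)+1) * (n ! : ℝ) := by
      push_cast [Nat.factorial_succ]; ring
    have h3 : (0:ℝ) < (n ! : ℝ) := by exact_mod_cast Nat.factorial_pos n
    rw [hC]
    simp only [Nat.add_sub_cancel]
    rw [show (γ : ℝ) + ↑(n+1) = (γ + 1) + ↑n by push_cast; ring,
      show ((↑(n+1) : ℝ)) * α + β = ↑n * α + (β + α) by push_cast; ring, hfs]
    have h4 : 0 < (n:ℝ) * α + (β + α) := by positivity
    have h5 := Gamma_pos_of_pos h4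
    field_simp
    ring
    norm_cast
  have hball : x ∈ Metric.ball (0:ℝ) R := by
    rw [mem_ball_zero_iff, Real.norm_eq_abs]
    linarith
  have h0ball : (0:ℝ) ∈ Metric.ball (0:ℝ) R := Metric.mem_ball_self (by linarith)
  have hg : ∀ (n : ℕ), ∀ z ∈ Metric.ball (0:ℝ) R,
      HasDerivAt (fun w => C n * w ^ n) (C n * ((n:ℝ) * z ^ (n - 1))) z :=
    fun n z _ => (hasDerivAt_pow n z).const_mul (C n)
  have hg' : ∀ (n : ℕ), ∀ z ∈ Metric.ball (0:ℝ) R,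
      ‖C n * ((n:ℝ) * z ^ (n - 1))‖ ≤ C n * ((n:ℝ) * R ^ (n - 1)) := by
    intro n z hz
    rw [mem_ball_zero_iff, Real.norm_eq_abs] at hz
    rw [norm_mul, norm_mul, norm_of_nonneg (hCpos n).le,
      norm_of_nonneg (by positivity : (0:ℝ) ≤ (n:ℝ)), Real.norm_eq_abs, abs_pow]
    have hple : |z| ^ (n - 1) ≤ R ^ (n - 1) := pow_le_pow_left₀ (abs_nonneg z) (by linarith) _
    exact mul_le_mul_of_nonneg_left (mul_le_mul_of_nonneg_left hple (by positivity)) (hCpos n).le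
  have hg0 : Summable fun n => C n * (0:ℝ) ^ n := by
    apply summable_of_ne_finset_zero (s := {0})
    intro n hn
    simp only [Finset.mem_singleton] at hn
    rw [zero_pow hn, mul_zero]
  have hder := hasDerivAt_tsum_of_isPreconnected hu Metric.isOpen_ball
    ((convex_ball (0:ℝ) R).isPreconnected) hg hg' h0ball hg0 hball
  have hsum : Summable (fun n : ℕ => C n * ((n:ℝ) * x ^ (n - 1))) :=
    Summable.of_norm_bounded hu fun n => hg' n x hball
  have hval : ∑' n : ℕ, C n * ((n:ℝ) * x ^ (n - 1)) = γ * genML α (β + α) (γ + 1) x := by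
    rw [Summable.tsum_eq_zero_add hsum]
    simp only [Nat.cast_zero, zero_mul, mul_zero, zero_add]
    have hterm : ∀ n : ℕ, C (n + 1) * ((↑(n+1):ℝ) * x ^ ((n+1) - 1))
        = γ * ((Gamma (γ + 1 + ↑n) / Gamma (γ + 1)) * x ^ n
            / (Gamma (↑n * α + (β + α)) * ↑n !)) := by
      intro n
      have hfs : ((n+1)! : ℝ) = ((n:ℝ)+1) * (n ! : ℝ) := by
        push_cast [Nat.factorial_succ]; ring
      have h3 : (0:ℝ) < (n ! : ℝ) := by exact_mod_cast Nat.factorial_pos n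
      have h4 : 0 < (n:ℝ) * α + (β + α) := by positivity
      have h5 := Gamma_pos_of_pos h4
      rw [hC]
      simp only [Nat.add_sub_cancel]
      rw [show (γ : ℝ) + ↑(n+1) = γ + 1 + ↑n by push_cast; ring,
        show ((↑(n+1) : ℝ)) * α + β = ↑n * α + (β + α) by push_cast; ring, hfs,
        Gamma_add_one hγ.ne']
      have hΓ1 : Gamma (γ + 1 + ↑n) = Gamma (γ + 1 + ↑n) := rfl
      push_cast
      field_simp
    rw [tsum_congr hterm, tsum_mul_left, hgen (β + α) (γ + 1)]
    congr 1
    exact tsum_congr fun n => by ring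
  rw [hgen β γ, ← hval]
  exact hder

private lemma iteratedDeriv_cmul (c : ℝ) (f : ℝ → ℝ) (k : ℕ) :
    iteratedDeriv k (fun x => c * f x) = fun x => c * iteratedDeriv k f x := by
  induction k generalizing f with
  | zero => simp [iteratedDeriv_zero]
  | succ n ih =>
    rw [iteratedDeriv_succ', iteratedDeriv_succ']
    rw [show deriv (fun x => c * f x) = fun x => c * deriv f x from
      funext fun x => deriv_const_mul_field c]
    exact ih (deriv f)

/-- `d^k/dx^k E_{α,β}^γ(x) = (γ)_k E_{α,β+kα}^{γ+k}(x)` for `k ≥ 0`, `α,β,γ > 0`. -/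
theorem genML_iteratedDeriv (α β γ : ℝ) (hα : 0 < α) (hβ : 0 < β) (hγ : 0 < γ)
    (k : ℕ) (x : ℝ) :
    iteratedDeriv k (genML α β γ) x
      = (Gamma (γ + k) / Gamma γ) * genML α (β + k * α) (γ + k) x := by
  induction k generalizing β γ with
  | zero =>
    simp [iteratedDeriv_zero, (Gamma_pos_of_pos hγ).ne']
  | succ k ih =>
    rw [iteratedDeriv_succ']
    rw [show deriv (genML α β γ) = fun z => γ * genML α (β + α) (γ + 1) z from
      funext fun z => (hasDerivAt_genML α β γ hα hβ hγ z).deriv]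
    rw [iteratedDeriv_cmul]
    simp only []
    rw [ih (β + α) (γ + 1) (by linarith) (by linarith)]
    rw [show (γ : ℝ) + 1 + (k:ℝ) = γ + ((k:ℕ)+1 : ℕ) by push_cast; ring,
      show β + α + (k:ℝ) * α = β + ((k:ℕ)+1 : ℕ) * α by push_cast; ring,
      Gamma_add_one hγ.ne']
    have hΓγ : Gamma γ ≠ 0 := (Gamma_pos_of_pos hγ).ne'
    field_simp
end

section
/- The probability generating function of the generalized Poisson process equals the generalized Mittag-Leffler function: for 0 < α ≤ 1, 0 < γ ≤ 1, λ > 0, t ≥ 0 and |z| ≤ 1, ∑_{k=0}^∞ z^k (γ)_k (λ t^α)^k / k! · E_{α, αk+1}^{γ+k}(−λ t^α) = E_{α,1}^γ((z−1)λ t^α). -/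
open Real Nat

/-! ### Auxiliary lemmas -/

lemma aux_gamma_ge_half {s : ℝ} (hs : 1 ≤ s) : (1 / 2 : ℝ) ≤ Gamma s := by
  have h2 : ∀ y : ℝ, 2 ≤ y → (1 : ℝ) ≤ Gamma y := by
    intro y hy
    have : Gamma 2 ≤ Gamma y := by
      rcases eq_or_lt_of_le hy with h | h
      · rw [h]
      · exact (Real.Gamma_strictMonoOn_Ici (by norm_num) hy h).le
    simpa [Real.Gamma_two] using this
  rcases le_or_gt 2 s with h | h
  · linarith [h2 s h]
  · have hs0 : s ≠ 0 := by linarith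
    have hG := Real.Gamma_add_one hs0
    have h1 : (1 : ℝ) ≤ Gamma (s + 1) := h2 _ (by linarith)
    have hpos : 0 < Gamma s := Real.Gamma_pos_of_pos (by linarith)
    nlinarith

lemma aux_gamma_ge_factorial : ∀ (n : ℕ) {s : ℝ}, (n : ℝ) + 1 ≤ s →
    (n ! : ℝ) / 2 ≤ Gamma s := by
  intro n
  induction n with
  | zero => intro s hs; simpa using aux_gamma_ge_half (by simpa using hs)
  | succ n ih =>
      intro s hs
      push_cast at hs
      have hs1 : (n : ℝ) + 1 ≤ s - 1 := by linarith
      have h1 := ih hs1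
      have hne : s - 1 ≠ 0 := by
        have : (0:ℝ) ≤ n := Nat.cast_nonneg n
        intro h; rw [h] at hs1; linarith
      have hG : Gamma s = (s - 1) * Gamma (s - 1) := by
        have := Real.Gamma_add_one hne
        simpa using this
      have hfpos : (0:ℝ) ≤ (n ! : ℝ) := by positivity
      have hcast : ((n + 1)! : ℝ) = ((n : ℝ) + 1) * (n ! : ℝ) := by
        push_cast [Nat.factorial_succ]; ring
      rw [hG, hcast]
      have hn0 : (0:ℝ) ≤ (n : ℝ) := Nat.cast_nonneg n
      nlinarith

lemma aux_pow_sub_le_factorial (c : ℕ) : ∀ n, c ≤ n → c ^ (n - c) ≤ n ! := by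
  intro n
  induction n with
  | zero => intro h; interval_cases c <;> simp
  | succ n ih =>
      intro h
      rcases eq_or_lt_of_le h with h | h
      · rw [← h]; simpa using Nat.one_le_iff_ne_zero.mpr (Nat.factorial_ne_zero c)
      · have hc : c ≤ n := Nat.lt_succ_iff.mp h
        have : n + 1 - c = (n - c) + 1 := by omega
        rw [this, pow_succ, Nat.factorial_succ]
        calc c ^ (n - c) * c ≤ n ! * (n + 1) :=
              Nat.mul_le_mul (ih hc) (by omega)
          _ = (n + 1) * n ! := by ring

lemma aux_summable_pow_div_gamma {a R : ℝ} (ha : 0 < a) (hR : 0 ≤ R) :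
    Summable (fun m : ℕ => R ^ m / Gamma (m * a + 1)) := by
  obtain ⟨j, hj1, hja⟩ : ∃ j : ℕ, 1 ≤ j ∧ 1 ≤ (j : ℝ) * a := by
    refine ⟨⌈1 / a⌉₊, Nat.one_le_ceil_iff.mpr (by positivity), ?_⟩
    have h := Nat.le_ceil (1 / a)
    calc (1:ℝ) = (1 / a) * a := by field_simp
      _ ≤ (⌈1 / a⌉₊ : ℝ) * a := by gcongr
  set b : ℕ := ⌈2 * R⌉₊ + 2 with hbdef
  have hbR : 2 * R ≤ (b : ℝ) := by
    have := Nat.le_ceil (2 * R); push_cast [hbdef]; linarith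
  have hb1 : (1:ℝ) ≤ (b : ℝ) := by
    have h1 : (1:ℕ) ≤ b := by omega
    exact_mod_cast h1
  set c : ℕ := b ^ j with hcdef
  have hc1 : 1 ≤ c := Nat.one_le_pow _ _ (by omega)
  -- key pointwise bound for large m
  have key : ∀ m : ℕ, j * c ≤ m →
      R ^ m / Gamma (m * a + 1) ≤ (2 * (c:ℝ) ^ c * (b:ℝ) ^ j) * (1 / 2) ^ m := by
    intro m hm
    have hma : (0:ℝ) ≤ (m : ℝ) * a := by positivity
    have hΓpos : 0 < Gamma ((m:ℝ) * a + 1) := Real.Gamma_pos_of_pos (by positivity)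
    -- floor bound
    have hfloor : ((⌊(m:ℝ) * a⌋₊ : ℝ)) + 1 ≤ (m:ℝ) * a + 1 := by
      have := Nat.floor_le hma; linarith
    have hG1 : ((⌊(m:ℝ) * a⌋₊)! : ℝ) / 2 ≤ Gamma ((m:ℝ) * a + 1) :=
      aux_gamma_ge_factorial _ hfloor
    -- m / j ≤ ⌊m a⌋
    have hdiv : m / j ≤ ⌊(m:ℝ) * a⌋₊ := by
      apply Nat.le_floor
      have h0 : (0:ℝ) ≤ ((m / j : ℕ) : ℝ) := Nat.cast_nonneg _
      have h1 : ((m / j : ℕ) : ℝ) ≤ ((m / j : ℕ) : ℝ) * ((j:ℝ) * a) := by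
        nlinarith
      have h2 : ((m / j : ℕ) : ℝ) * (j : ℝ) ≤ (m : ℝ) := by
        exact_mod_cast Nat.cast_le.mpr (Nat.div_mul_le_self m j)
      nlinarith
    have hj0 : 0 < j := hj1
    have hcle : c ≤ m / j := (Nat.le_div_iff_mul_le hj0).mpr (mul_comm j c ▸ hm)
    have hfac : (c : ℝ) ^ (m / j - c) ≤ ((⌊(m:ℝ) * a⌋₊)! : ℝ) := by
      exact_mod_cast Nat.cast_le.mpr
        ((aux_pow_sub_le_factorial c (m / j) hcle).trans (Nat.factorial_le hdiv))
    -- c ^ (m/j - c) = c^(m/j) / c^c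
    have hc0 : (0:ℝ) < (c : ℝ) := by exact_mod_cast hc1
    have hsplit : (c : ℝ) ^ (m / j) = (c : ℝ) ^ (m / j - c) * (c : ℝ) ^ c := by
      rw [← pow_add, Nat.sub_add_cancel hcle]
    -- c ^ (m/j) = b ^ (j * (m/j)) ≥ b^m / b^j
    have hb0 : (0:ℝ) < (b : ℝ) := by linarith
    have hmod : (b : ℝ) ^ (j * (m / j)) * (b : ℝ) ^ (m % j) = (b : ℝ) ^ m := by
      rw [← pow_add, Nat.div_add_mod m j]
    have hmodle : (b : ℝ) ^ (m % j) ≤ (b : ℝ) ^ j :=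
      pow_le_pow_right₀ hb1 (Nat.mod_lt m hj0).le
    have hbm : (b : ℝ) ^ m / (b : ℝ) ^ j ≤ (b : ℝ) ^ (j * (m / j)) := by
      rw [div_le_iff₀ (by positivity)]
      calc (b : ℝ) ^ m = (b : ℝ) ^ (j * (m / j)) * (b : ℝ) ^ (m % j) := hmod.symm
        _ ≤ (b : ℝ) ^ (j * (m / j)) * (b : ℝ) ^ j := by gcongr
    have hcb : (c : ℝ) ^ (m / j) = (b : ℝ) ^ (j * (m / j)) := by
      rw [hcdef]; push_cast; rw [← pow_mul]
    -- combine: Gamma ≥ b^m / (2 * c^c * b^j)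
    have hlow : (b : ℝ) ^ m / (2 * (c:ℝ) ^ c * (b:ℝ) ^ j) ≤ Gamma ((m:ℝ) * a + 1) := by
      have h1 : (b : ℝ) ^ m / (b : ℝ) ^ j / (c : ℝ) ^ c ≤ (c : ℝ) ^ (m / j - c) := by
        rw [div_le_iff₀ (by positivity)]
        calc (b:ℝ) ^ m / (b:ℝ) ^ j ≤ (b : ℝ) ^ (j * (m / j)) := hbm
          _ = (c : ℝ) ^ (m / j) := hcb.symm
          _ = (c : ℝ) ^ (m / j - c) * (c : ℝ) ^ c := hsplit
      have h2 : (b : ℝ) ^ m / (b : ℝ) ^ j / (c : ℝ) ^ c / 2 ≤ Gamma ((m:ℝ) * a + 1) := by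
        calc (b : ℝ) ^ m / (b : ℝ) ^ j / (c : ℝ) ^ c / 2
            ≤ (c : ℝ) ^ (m / j - c) / 2 := by gcongr
          _ ≤ ((⌊(m:ℝ) * a⌋₊)! : ℝ) / 2 := by gcongr
          _ ≤ _ := hG1
      calc (b : ℝ) ^ m / (2 * (c:ℝ) ^ c * (b:ℝ) ^ j)
          = (b : ℝ) ^ m / (b : ℝ) ^ j / (c : ℝ) ^ c / 2 := by ring
        _ ≤ _ := h2
    -- final bound
    have hRb : R / (b : ℝ) ≤ 1 / 2 := by rw [div_le_div_iff₀ hb0 (by norm_num)]; linarith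
    have hnum : (0:ℝ) ≤ R ^ m := by positivity
    have hLpos : (0:ℝ) < (b : ℝ) ^ m / (2 * (c:ℝ) ^ c * (b:ℝ) ^ j) := by positivity
    calc R ^ m / Gamma ((m:ℝ) * a + 1)
        ≤ R ^ m / ((b : ℝ) ^ m / (2 * (c:ℝ) ^ c * (b:ℝ) ^ j)) := by gcongr
      _ = (2 * (c:ℝ) ^ c * (b:ℝ) ^ j) * (R / (b : ℝ)) ^ m := by
          rw [div_pow]; field_simp
      _ ≤ (2 * (c:ℝ) ^ c * (b:ℝ) ^ j) * (1 / 2) ^ m := by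
          have h0 : 0 ≤ R / (b:ℝ) := div_nonneg hR hb0.le
          gcongr <;> positivity
  -- conclude summability via shift and geometric comparison
  rw [← summable_nat_add_iff (j * c)]
  apply Summable.of_nonneg_of_le
    (fun m => by positivity)
    (fun m => key (m + j * c) (Nat.le_add_left _ _))
  have : Summable (fun m : ℕ =>
      ((2 * (c:ℝ) ^ c * (b:ℝ) ^ j) * (1 / 2) ^ (j * c)) * (1 / 2) ^ m) :=
    (summable_geometric_of_lt_one (by norm_num) (by norm_num)).mul_left _
  exact this.congr (fun m => by rw [pow_add]; ring)

lemma aux_poch_le {γ : ℝ} (hγ : 0 < γ) (hγ' : γ ≤ 1) :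
    ∀ m : ℕ, Gamma (γ + m) ≤ m ! * Gamma γ := by
  intro m
  induction m with
  | zero => simp
  | succ m ih =>
      have hpos : 0 < γ + m := by positivity
      have h1 : Gamma (γ + (m + 1 : ℕ)) = (γ + m) * Gamma (γ + m) := by
        have := Real.Gamma_add_one (ne_of_gt hpos)
        rw [← this]; congr 1; push_cast; ring
      rw [h1]
      have h2 : γ + (m:ℝ) ≤ (m:ℝ) + 1 := by linarith
      have h3 : 0 < Gamma (γ + m) := Real.Gamma_pos_of_pos hpos
      have h4 : ((m+1)! : ℝ) = ((m:ℝ) + 1) * (m ! : ℝ) := by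
        push_cast [Nat.factorial_succ]; ring
      rw [h4]
      have h5 : (0:ℝ) < Gamma γ := Real.Gamma_pos_of_pos hγ
      have hf1 : (1:ℝ) ≤ (m ! : ℝ) := by
        exact_mod_cast Nat.one_le_iff_ne_zero.mpr (Nat.factorial_ne_zero m)
      have hm0 : (0:ℝ) ≤ (m:ℝ) := Nat.cast_nonneg m
      nlinarith

lemma aux_antidiag_sum (u v : ℝ) (m : ℕ) :
    ∑ p ∈ Finset.HasAntidiagonal.antidiagonal m, u ^ p.1 * v ^ p.2 / ((p.1)! * (p.2)!)
      = (u + v) ^ m / m ! := by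
  rw [Finset.Nat.sum_antidiagonal_eq_sum_range_succ_mk, add_pow, Finset.sum_div]
  refine Finset.sum_congr rfl ?_
  intro k hk
  have hk' : k ≤ m := Finset.mem_range_succ_iff.mp hk
  have hc : ((Nat.choose m k : ℕ) : ℝ) * ((k ! : ℝ) * ((m - k)! : ℝ)) = (m ! : ℝ) := by
    exact_mod_cast congrArg (Nat.cast (R := ℝ))
      (by rw [← mul_assoc]; exact Nat.choose_mul_factorial_mul_factorial hk')
  have h1 : (k ! : ℝ) ≠ 0 := by positivity
  have h2 : ((m - k)! : ℝ) ≠ 0 := by positivity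
  have h3 : (m ! : ℝ) ≠ 0 := by positivity
  field_simp
  linear_combination (- u ^ k * v ^ (m - k)) * hc

/-- The pgf of the generalized Poisson process: for `|z| ≤ 1`,
`∑_k z^k (γ)_k (λt^α)^k/k! E_{α,αk+1}^{γ+k}(−λt^α) = E_{α,1}^γ((z−1)λt^α)`. -/
theorem gpp_pgf (α γ lam t z : ℝ)
    (hα : 0 < α) (hα' : α ≤ 1) (hγ : 0 < γ) (hγ' : γ ≤ 1)
    (hlam : 0 < lam) (ht : 0 ≤ t) (hz : |z| ≤ 1) :
    (∑' k : ℕ, z ^ k * ((Gamma (γ + k) / Gamma γ) * (lam * t ^ α) ^ k / k !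
        * genML α (α * k + 1) (γ + k) (-(lam * t ^ α))))
      = genML α 1 γ ((z - 1) * lam * t ^ α) := by
  have hassoc : (z - 1) * lam * t ^ α = (z - 1) * (lam * t ^ α) := mul_assoc _ _ _
  rw [hassoc]
  set x : ℝ := lam * t ^ α with hxdef
  have hx : 0 ≤ x := mul_nonneg hlam.le (Real.rpow_nonneg ht α)
  have hΓγ : 0 < Gamma γ := Real.Gamma_pos_of_pos hγ
  -- the common double-indexed family
  set G : ℕ × ℕ → ℝ := fun p =>
    x ^ (p.1 + p.2) * (Gamma (γ + ((p.1 + p.2 : ℕ) : ℝ)) / Gamma γ)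
      / ((p.1)! * (p.2)! * Gamma (((p.1 + p.2 : ℕ) : ℝ) * α + 1)) with hGdef
  set F : ℕ × ℕ → ℝ := fun p => z ^ p.1 * (-1 : ℝ) ^ p.2 * G p with hFdef
  have hΓm : ∀ m : ℕ, 0 < Gamma ((m : ℝ) * α + 1) := fun m =>
    Real.Gamma_pos_of_pos (by positivity)
  have hΓγm : ∀ m : ℕ, 0 < Gamma (γ + m) := fun m =>
    Real.Gamma_pos_of_pos (by positivity)
  have hGpos : ∀ p, 0 ≤ G p := by
    intro p
    have h1 := hΓm (p.1 + p.2)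
    have h2 := hΓγm (p.1 + p.2)
    have hf1 : (0:ℝ) < ((p.1)! : ℝ) := by positivity
    have hf2 : (0:ℝ) < ((p.2)! : ℝ) := by positivity
    exact div_nonneg (mul_nonneg (pow_nonneg hx _) (div_nonneg h2.le hΓγ.le))
      (by positivity)
  -- fiberwise sum of G is bounded by (2x)^m / Γ(mα+1)
  have hGfiber : ∀ m : ℕ, ∑ p ∈ Finset.HasAntidiagonal.antidiagonal m, G p
      = x ^ m * (Gamma (γ + m) / Gamma γ) / Gamma ((m:ℝ) * α + 1) * (2 ^ m / m !) := by
    intro m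
    have : ∀ p ∈ Finset.HasAntidiagonal.antidiagonal m, G p
        = x ^ m * (Gamma (γ + m) / Gamma γ) / Gamma ((m:ℝ) * α + 1)
          * ((1:ℝ) ^ p.1 * (1:ℝ) ^ p.2 / ((p.1)! * (p.2)!)) := by
      intro p hp
      have hpm : p.1 + p.2 = m := Finset.HasAntidiagonal.mem_antidiagonal.mp hp
      simp only [hGdef]
      rw [hpm]
      ring
    rw [Finset.sum_congr rfl this, ← Finset.mul_sum, aux_antidiag_sum]
    norm_num
  have hGfiber_le : ∀ m : ℕ, ∑ p ∈ Finset.HasAntidiagonal.antidiagonal m, G p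
      ≤ (2 * x) ^ m / Gamma ((m:ℝ) * α + 1) := by
    intro m
    rw [hGfiber m]
    have hpoch := aux_poch_le hγ hγ' m
    have hfpos : (0:ℝ) < (m ! : ℝ) := by positivity
    have h1 : Gamma (γ + m) / Gamma γ ≤ (m ! : ℝ) := by
      rw [div_le_iff₀ hΓγ]; exact hpoch
    have h2 : 0 ≤ x ^ m := pow_nonneg hx m
    have h3 := (hΓm m)
    calc x ^ m * (Gamma (γ + m) / Gamma γ) / Gamma ((m:ℝ) * α + 1) * (2 ^ m / m !)
        ≤ x ^ m * (m ! : ℝ) / Gamma ((m:ℝ) * α + 1) * (2 ^ m / m !) := by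
          gcongr
      _ = 2 ^ m * x ^ m / Gamma ((m:ℝ) * α + 1) := by field_simp
      _ = (2 * x) ^ m / Gamma ((m:ℝ) * α + 1) := by rw [mul_pow 2 x m]
  -- summability of G
  have hGsum : Summable G := by
    have h2x : (0:ℝ) ≤ 2 * x := by linarith
    have hsum2 : Summable (fun m : ℕ =>
        ∑' p : (Finset.HasAntidiagonal.antidiagonal m : Finset (ℕ × ℕ)), G p) := by
      apply Summable.of_nonneg_of_le (fun m => tsum_nonneg (fun p => hGpos _))
        (fun m => ?_) (aux_summable_pow_div_gamma hα h2x)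
      rw [tsum_fintype]
      calc ∑ p : (Finset.HasAntidiagonal.antidiagonal m : Finset (ℕ × ℕ)), G p
          = ∑ p ∈ Finset.HasAntidiagonal.antidiagonal m, G p := Finset.sum_finset_coe _ _
        _ ≤ (2 * x) ^ m / Gamma ((m:ℝ) * α + 1) := hGfiber_le m
    exact Finset.HasAntidiagonal.sigmaAntidiagonalEquivProd.summable_iff.mp
      ((summable_sigma_of_nonneg (fun σ => hGpos _)).mpr
        ⟨fun m => (hasSum_fintype _).summable, hsum2⟩)
  -- summability of F
  have hFsum : Summable F := by
    apply Summable.of_norm_bounded hGsum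
    intro p
    simp only [hFdef, Real.norm_eq_abs]
    rw [abs_mul, abs_mul, abs_pow, abs_pow, abs_neg, abs_one, one_pow, mul_one,
      abs_of_nonneg (hGpos p)]
    calc |z| ^ p.1 * G p ≤ 1 ^ p.1 * G p := by
          gcongr
      _ = G p := by rw [one_pow, one_mul]
  -- LHS equals iterated sum of F
  have hL : (∑' k : ℕ, z ^ k * ((Gamma (γ + k) / Gamma γ) * x ^ k / k !
        * genML α (α * k + 1) (γ + k) (-x)))
      = ∑' (k : ℕ) (n : ℕ), F (k, n) := by
    refine tsum_congr fun k => ?_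
    rw [genML]
    have hrw : z ^ k * ((Gamma (γ + k) / Gamma γ) * x ^ k / k !
        * ∑' n : ℕ, (Gamma (γ + k + n) / Gamma (γ + k)) * (-x) ^ n
            / (Gamma (n * α + (α * k + 1)) * n !))
        = ∑' n : ℕ, (z ^ k * ((Gamma (γ + k) / Gamma γ) * x ^ k / k !))
            * ((Gamma (γ + k + n) / Gamma (γ + k)) * (-x) ^ n
            / (Gamma (n * α + (α * k + 1)) * n !)) := by
      rw [tsum_mul_left]; ring
    rw [hrw]
    refine tsum_congr fun n => ?_
    have hΓk : Gamma (γ + k) ≠ 0 := (hΓγm k).ne'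
    have harg1 : (n:ℝ) * α + (α * k + 1) = ((k + n : ℕ) : ℝ) * α + 1 := by
      push_cast; ring
    have harg2 : γ + (k:ℝ) + (n:ℝ) = γ + ((k + n : ℕ) : ℝ) := by push_cast; ring
    rw [harg1, harg2]
    simp only [hFdef, hGdef]
    have hneg : (-x) ^ n = (-1 : ℝ) ^ n * x ^ n := neg_pow x n
    rw [hneg]
    have hxkn : x ^ (k + n) = x ^ k * x ^ n := pow_add x k n
    rw [hxkn]
    have hk0 : (k ! : ℝ) ≠ 0 := by positivity
    have hn0 : (n ! : ℝ) ≠ 0 := by positivity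
    have hΓ1 : Gamma (((k + n : ℕ) : ℝ) * α + 1) ≠ 0 := (hΓm (k + n)).ne'
    field_simp
  rw [hL, ← Summable.tsum_prod' hFsum hFsum.prod_factor]
  -- regroup along antidiagonals
  have hsigma : ∑' p : ℕ × ℕ, F p = ∑' m : ℕ, ∑ p ∈ Finset.HasAntidiagonal.antidiagonal m, F p := by
    have h1 : Summable (F ∘ Finset.HasAntidiagonal.sigmaAntidiagonalEquivProd) :=
      Finset.HasAntidiagonal.sigmaAntidiagonalEquivProd.summable_iff.mpr hFsum
    have h2 := Summable.tsum_sigma' (f := F ∘ Finset.HasAntidiagonal.sigmaAntidiagonalEquivProd)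
      (fun m => (hasSum_fintype _).summable) h1
    calc ∑' p : ℕ × ℕ, F p
        = ∑' σ, (F ∘ Finset.HasAntidiagonal.sigmaAntidiagonalEquivProd) σ :=
          (Finset.HasAntidiagonal.sigmaAntidiagonalEquivProd.tsum_eq F).symm
      _ = ∑' (m : ℕ) (p : (Finset.HasAntidiagonal.antidiagonal m : Finset (ℕ × ℕ))),
            (F ∘ Finset.HasAntidiagonal.sigmaAntidiagonalEquivProd) ⟨m, p⟩ := h2
      _ = ∑' m : ℕ, ∑ p ∈ Finset.HasAntidiagonal.antidiagonal m, F p := by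
          refine tsum_congr fun m => ?_
          rw [tsum_fintype]
          exact Finset.sum_finset_coe _ _
  rw [hsigma]
  rw [genML]
  refine tsum_congr fun m => ?_
  -- compute the antidiagonal sum of F
  have hstep : ∀ p ∈ Finset.HasAntidiagonal.antidiagonal m, F p
      = x ^ m * (Gamma (γ + m) / Gamma γ) / Gamma ((m:ℝ) * α + 1)
        * (z ^ p.1 * (-1 : ℝ) ^ p.2 / ((p.1)! * (p.2)!)) := by
    intro p hp
    have hpm : p.1 + p.2 = m := Finset.HasAntidiagonal.mem_antidiagonal.mp hp
    simp only [hFdef, hGdef]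
    rw [hpm]
    ring
  rw [Finset.sum_congr rfl hstep, ← Finset.mul_sum, aux_antidiag_sum]
  have : z + -1 = z - 1 := by ring
  rw [this, mul_pow (z - 1) x m]
  ring
end

section
/- The n-th factorial moment of the generalized Poisson process with pgf G(z) = E_{α,1}^γ((z−1)λt^α) is given by G^{(n)}(1) = (γ)_n (λ t^α)^n / Γ(nα + 1) for all n ≥ 1. -/
open Real Nat

lemma one_le_Gamma_of_two_le {x : ℝ} (hx : 2 ≤ x) : 1 ≤ Gamma x := by
  rcases eq_or_lt_of_le hx with h | h
  · rw [← h, Real.Gamma_two]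
  · have := Real.Gamma_strictMonoOn_Ici (a := 2) (b := x) (by simp) (le_of_lt h) h
    rw [Real.Gamma_two] at this
    exact this.le

lemma half_le_Gamma_of_one_le {x : ℝ} (hx : 1 ≤ x) : 1/2 ≤ Gamma x := by
  rcases le_or_gt 2 x with h | h
  · linarith [one_le_Gamma_of_two_le h]
  · have hx0 : x ≠ 0 := by linarith
    have h1 : Gamma (x + 1) = x * Gamma x := Real.Gamma_add_one hx0
    have h2 : 1 ≤ Gamma (x + 1) := one_le_Gamma_of_two_le (by linarith)
    have h3 : 0 < Gamma x := Real.Gamma_pos_of_pos (by linarith)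
    nlinarith

lemma Gamma_add_one_le_one {γ : ℝ} (hγ : 0 < γ) (hγ' : γ ≤ 1) : Gamma (γ + 1) ≤ 1 := by
  have h := Real.convexOn_Gamma.2 (Set.mem_Ioi.2 one_pos) (Set.mem_Ioi.2 two_pos)
    (by linarith : (0:ℝ) ≤ 1 - γ) hγ.le (by ring : (1 - γ) + γ = 1)
  simp only [smul_eq_mul, Real.Gamma_one, Real.Gamma_two] at h
  have he : (1 - γ) * 1 + γ * 2 = γ + 1 := by ring
  rw [he] at h
  linarith

lemma ratio_le {γ : ℝ} (hγ : 0 < γ) (hγ' : γ ≤ 1) (k : ℕ) :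
    Gamma (γ + k) / Gamma γ ≤ 2 * (k + 1)! := by
  have hΓγ0 : 0 < Gamma γ := Real.Gamma_pos_of_pos hγ
  have hΓγ : (1:ℝ)/2 ≤ Gamma γ := by
    have h1 : Gamma (γ + 1) = γ * Gamma γ := Real.Gamma_add_one hγ.ne'
    have h2 : (1:ℝ)/2 ≤ Gamma (γ + 1) := half_le_Gamma_of_one_le (by linarith)
    nlinarith
  rcases Nat.eq_zero_or_pos k with rfl | hk1
  · simp only [Nat.cast_zero, add_zero, div_self hΓγ0.ne']
    norm_num
  have hnum : Gamma (γ + k) ≤ ((k + 1)! : ℝ) := by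
    rcases Nat.lt_or_ge k 2 with hk | hk
    · interval_cases k
      · calc Gamma (γ + (1:ℕ)) ≤ 1 := by simpa using Gamma_add_one_le_one hγ hγ'
          _ ≤ ((1 + 1)! : ℝ) := by norm_num
    · have h2 : (2:ℝ) ≤ γ + k := by
        have : (2:ℝ) ≤ (k:ℝ) := by exact_mod_cast hk
        linarith
      have h3 : γ + k ≤ (k:ℝ) + 2 := by linarith
      calc Gamma (γ + k) ≤ Gamma ((k:ℝ) + 2) := by
            rcases eq_or_lt_of_le h3 with h | h
            · rw [h]
            · exact (Real.Gamma_strictMonoOn_Ici (Set.mem_Ici.2 h2)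
                (Set.mem_Ici.2 (by linarith)) h).le
        _ = ((k + 1)! : ℝ) := by
            have he : ((k:ℝ) + 2) = ((k + 1 : ℕ) : ℝ) + 1 := by push_cast; ring
            rw [he, Real.Gamma_nat_eq_factorial]
  have hpos : (0:ℝ) < Gamma (γ + k) := Real.Gamma_pos_of_pos (by positivity)
  rw [div_le_iff₀ hΓγ0]
  have hf1 : (0:ℝ) < ((k+1)! : ℝ) := Nat.cast_pos.2 (Nat.factorial_pos (k+1))
  nlinarith

/-- The `n`-th factorial moment of the GPP:
`G^{(n)}(1) = (γ)_n (λ t^α)^n / Γ(nα+1)` where `G(z) = E_{α,1}^γ((z−1)λt^α)`. -/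
theorem gpp_factorial_moment (α γ lam t : ℝ)
    (hα : 0 < α) (hα' : α ≤ 1) (hγ : 0 < γ) (hγ' : γ ≤ 1)
    (hlam : 0 < lam) (ht : 0 ≤ t) (n : ℕ) (hn : 1 ≤ n) :
    iteratedDeriv n (fun z : ℝ => genML α 1 γ ((z - 1) * lam * t ^ α)) 1
      = (Gamma (γ + n) / Gamma γ) * (lam * t ^ α) ^ n / Gamma (n * α + 1) := by
  set u : ℝ := lam * t ^ α with hu
  set c : ℕ → ℝ := fun k => (Gamma (γ + k) / Gamma γ) * u ^ k / (Gamma (k * α + 1) * k !)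
    with hc
  set p : FormalMultilinearSeries ℝ ℝ ℝ := FormalMultilinearSeries.ofScalars ℝ c with hp
  set f : ℝ → ℝ := fun z : ℝ => genML α 1 γ ((z - 1) * lam * t ^ α) with hf
  -- bound on coefficients
  have hGammalow : ∀ k : ℕ, (1:ℝ)/2 ≤ Gamma (k * α + 1) := fun k =>
    half_le_Gamma_of_one_le (by
      have : (0:ℝ) ≤ (k:ℝ) * α := by positivity
      linarith)
  have hcb : ∀ k : ℕ, |c k| ≤ 4 * (k + 1) * |u| ^ k := by
    intro k
    have h1 : 0 < Gamma (k * α + 1) := lt_of_lt_of_le (by norm_num) (hGammalow k)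
    have hγk : (0:ℝ) < γ + k := by positivity
    have h2 : 0 < Gamma (γ + k) / Gamma γ :=
      div_pos (Real.Gamma_pos_of_pos hγk) (Real.Gamma_pos_of_pos hγ)
    have hkf0 : (0:ℝ) < (k ! : ℝ) := Nat.cast_pos.2 k.factorial_pos
    have hck : |c k| = Gamma (γ + k) / Gamma γ * |u| ^ k / (Gamma (k * α + 1) * k !) := by
      simp only [hc]
      rw [abs_div, abs_mul, abs_pow, abs_of_pos h2, abs_of_pos (mul_pos h1 hkf0)]
    rw [hck]
    have hr := ratio_le hγ hγ' k
    have hfac : ((k+1)! : ℝ) = (k + 1) * k ! := by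
      rw [Nat.factorial_succ]; push_cast; ring
    have hden : (1:ℝ)/2 * k ! ≤ Gamma (k * α + 1) * k ! := by
      apply mul_le_mul_of_nonneg_right (hGammalow k) (by positivity)
    have hkf : (0:ℝ) < k ! := Nat.cast_pos.2 k.factorial_pos
    calc Gamma (γ + k) / Gamma γ * |u| ^ k / (Gamma (k * α + 1) * k !)
        ≤ 2 * (k + 1)! * |u| ^ k / ((1:ℝ)/2 * k !) := by
          apply div_le_div₀ (by positivity) _ (by positivity) hden
          exact mul_le_mul_of_nonneg_right hr (by positivity)
      _ = 4 * (k + 1) * |u| ^ k := by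
          rw [hfac]; field_simp; ring
  -- radius is positive
  have hrpos : 0 < p.radius := by
    set r : NNReal := ⟨(2 * (|u| + 1))⁻¹, by positivity⟩ with hr
    have hrle : r ≤ p.radius := by
      apply p.le_radius_of_bound 4
      intro k
      have hnorm : ‖p k‖ = |c k| := by
        rw [hp, FormalMultilinearSeries.ofScalars_norm]
        rfl
      rw [hnorm]
      have hrv : (r : ℝ) = (2 * (|u| + 1))⁻¹ := rfl
      have habs : 0 ≤ |u| := abs_nonneg u
      have hkey : |c k| * (r:ℝ) ^ k ≤ 4 * (k + 1) * |u| ^ k * (2 * (|u| + 1))⁻¹ ^ k := by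
        rw [hrv]
        exact mul_le_mul_of_nonneg_right (hcb k) (by positivity)
      refine hkey.trans ?_
      have h1 : |u| ^ k * (2 * (|u| + 1))⁻¹ ^ k ≤ (1/2) ^ k := by
        rw [← mul_pow]
        apply pow_le_pow_left₀ (by positivity)
        rw [mul_inv, ← mul_assoc]
        have h2 : |u| * (|u| + 1)⁻¹ ≤ 1 := by
          rw [mul_inv_le_iff₀ (by positivity)]
          linarith
        calc |u| * 2⁻¹ * (|u| + 1)⁻¹ = |u| * (|u| + 1)⁻¹ * 2⁻¹ := by ring
          _ ≤ 1 * 2⁻¹ := by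
              apply mul_le_mul_of_nonneg_right h2 (by norm_num)
          _ = 1/2 := by norm_num
      have h3 : ((k:ℝ) + 1) * (1/2) ^ k ≤ 1 := by
        rw [div_pow, one_pow, mul_one_div, div_le_one (by positivity)]
        exact_mod_cast Nat.succ_le_of_lt ((Nat.lt_two_pow_self (n := k)))
      calc 4 * ((k:ℝ) + 1) * |u| ^ k * (2 * (|u| + 1))⁻¹ ^ k
          = 4 * (((k:ℝ) + 1) * (|u| ^ k * (2 * (|u| + 1))⁻¹ ^ k)) := by ring
        _ ≤ 4 * (((k:ℝ) + 1) * (1/2) ^ k) := by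
            apply mul_le_mul_of_nonneg_left _ (by norm_num)
            exact mul_le_mul_of_nonneg_left h1 (by positivity)
        _ ≤ 4 * 1 := by
            apply mul_le_mul_of_nonneg_left h3 (by norm_num)
        _ = 4 := by norm_num
    have hr0 : 0 < r := by
      rw [hr]
      exact_mod_cast (show (0:ℝ) < (2 * (|u| + 1))⁻¹ by positivity)
    exact lt_of_lt_of_le (ENNReal.coe_pos.mpr hr0) hrle
  -- the function equals the sum of the power series
  have hsum_eq : ∀ y : ℝ, f (1 + y) = p.sum y := by
    intro y
    rw [hf]
    simp only
    rw [genML, FormalMultilinearSeries.sum]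
    apply tsum_congr
    intro k
    rw [hp, FormalMultilinearSeries.ofScalars_apply_eq, hc]
    simp only [smul_eq_mul]
    rw [hu]
    ring
  -- power series representation at 1
  have hF : HasFPowerSeriesOnBall f p 1 p.radius := by
    refine ⟨le_rfl, hrpos, fun hy => ?_⟩
    rw [hsum_eq]
    have := (p.hasFPowerSeriesOnBall hrpos).hasSum hy
    rwa [zero_add] at this
  -- extract the derivative
  have hkey := hF.factorial_smul (1 : ℝ) n
  rw [iteratedDeriv_eq_iteratedFDeriv, ← hkey]
  rw [hp, FormalMultilinearSeries.ofScalars_apply_eq]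
  simp only [one_pow, smul_eq_mul, mul_one, nsmul_eq_mul]
  rw [hc]
  have hΓ : 0 < Gamma ((n:ℝ) * α + 1) := Real.Gamma_pos_of_pos (by positivity)
  have hnf : (0:ℝ) < n ! := Nat.cast_pos.2 n.factorial_pos
  rw [hu]
  field_simp
end

section
/- For α > 0, the one-dimensional integral identity (1/Γ(α)²)·∫₀^t (t−τ)^{α−1} [∫₀^τ (t−τ')^{α−1} τ' dτ' + ∫_τ^t (t−τ')^{α−1} τ dτ'] dτ = t^{2α+1} / ((2α+1) Γ(α+1)²) holds. -/
open Real

private lemma rpow_shift_int (t a b β : ℝ) (hβ : -1 < β) :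
    ∫ s in a..b, (t - s) ^ β = ((t - a) ^ (β + 1) - (t - b) ^ (β + 1)) / (β + 1) := by
  rw [intervalIntegral.integral_comp_sub_left (fun x => x ^ β) t,
    integral_rpow (Or.inl hβ)]

private lemma rpow_shift_integrable (t a b β : ℝ) (hβ : -1 < β) :
    IntervalIntegrable (fun s => (t - s) ^ β) MeasureTheory.volume a b := by
  have := (intervalIntegral.intervalIntegrable_rpow' (a := t - a) (b := t - b)
    hβ).comp_sub_left t
  simpa using this

private lemma rpow_succ (x γ : ℝ) (hx : 0 ≤ x) (hγ : 0 < γ) :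
    x ^ γ * x = x ^ (γ + 1) := by
  rcases eq_or_lt_of_le hx with h | h
  · rw [← h, Real.zero_rpow hγ.ne', zero_mul, Real.zero_rpow (by linarith)]
  · rw [Real.rpow_add_one h.ne']

private lemma rpow_pred_mul (x γ : ℝ) (hx : 0 ≤ x) (hγ : 0 < γ) :
    x ^ (γ - 1) * x = x ^ γ := by
  rcases eq_or_lt_of_le hx with h | h
  · rw [← h, mul_zero, Real.zero_rpow hγ.ne']
  · rw [← Real.rpow_add_one h.ne', sub_add_cancel]

private lemma inner_eq (α t τ : ℝ) (hα : 0 < α) (h0 : 0 ≤ τ) (hτ : τ ≤ t) :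
    (∫ s in (0:ℝ)..τ, (t - s) ^ (α - 1) * s)
      + (∫ s in τ..t, (t - s) ^ (α - 1) * τ)
      = (t ^ (α + 1) - (t - τ) ^ (α + 1)) / (α * (α + 1)) := by
  have hαm : -1 < α - 1 := by linarith
  have hα1 : (0:ℝ) < α + 1 := by linarith
  have ht0 : 0 ≤ t := le_trans h0 hτ
  have htτ : 0 ≤ t - τ := by linarith
  have e1 : (∫ s in (0:ℝ)..τ, (t - s) ^ (α - 1) * s)
      = ∫ s in (0:ℝ)..τ, (t * (t - s) ^ (α - 1) - (t - s) ^ α) := by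
    apply intervalIntegral.integral_congr
    intro s hs
    rw [Set.uIcc_of_le h0] at hs
    have hs1 : 0 ≤ t - s := by linarith [hs.2]
    calc (t - s) ^ (α - 1) * s
        = t * (t - s) ^ (α - 1) - (t - s) ^ (α - 1) * (t - s) := by ring
      _ = t * (t - s) ^ (α - 1) - (t - s) ^ α := by
          rw [rpow_pred_mul _ _ hs1 hα]
  rw [e1, intervalIntegral.integral_sub
      ((rpow_shift_integrable t 0 τ (α - 1) hαm).const_mul t)
      (rpow_shift_integrable t 0 τ α (by linarith)),
    intervalIntegral.integral_const_mul,
    intervalIntegral.integral_mul_const,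
    rpow_shift_int t 0 τ (α - 1) hαm,
    rpow_shift_int t 0 τ α (by linarith),
    rpow_shift_int t τ t (α - 1) hαm]
  rw [sub_add_cancel, sub_zero, sub_self, Real.zero_rpow hα.ne']
  rw [← rpow_succ t α ht0 hα, ← rpow_succ (t - τ) α htτ hα]
  field_simp
  ring

/-- The key one-dimensional integral identity used in computing the second moment of the
fractional integral of a Poisson random field:
`(1/Γ(α)²)∫₀ᵗ (t−τ)^{α−1}[∫₀^τ (t−τ')^{α−1}τ' dτ' + ∫_τ^t (t−τ')^{α−1}τ dτ'] dτ
 = t^{2α+1}/((2α+1)Γ(α+1)²)`. -/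
theorem frac_integral_min_identity (α t : ℝ) (hα : 0 < α) (ht : 0 < t) :
    (1 / (Gamma α) ^ 2) *
      ∫ τ in (0:ℝ)..t, (t - τ) ^ (α - 1) *
        ((∫ s in (0:ℝ)..τ, (t - s) ^ (α - 1) * s)
          + (∫ s in τ..t, (t - s) ^ (α - 1) * τ))
      = t ^ (2 * α + 1) / ((2 * α + 1) * (Gamma (α + 1)) ^ 2) := by
  have hαm : -1 < α - 1 := by linarith
  have h2α : -1 < 2 * α := by linarith
  have e : (∫ τ in (0:ℝ)..t, (t - τ) ^ (α - 1) *
        ((∫ s in (0:ℝ)..τ, (t - s) ^ (α - 1) * s)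
          + (∫ s in τ..t, (t - s) ^ (α - 1) * τ)))
      = ∫ τ in (0:ℝ)..t,
          (t ^ (α + 1) * (t - τ) ^ (α - 1) - (t - τ) ^ (2 * α)) / (α * (α + 1)) := by
    apply intervalIntegral.integral_congr
    intro τ hτ
    rw [Set.uIcc_of_le ht.le] at hτ
    simp only
    rw [inner_eq α t τ hα hτ.1 hτ.2]
    have h1 : 0 ≤ t - τ := by linarith [hτ.2]
    have key : (t - τ) ^ (α - 1) * (t - τ) ^ (α + 1) = (t - τ) ^ (2 * α) := by
      rcases eq_or_lt_of_le h1 with h | h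
      · rw [← h, Real.zero_rpow (by linarith : α + 1 ≠ 0), mul_zero,
          Real.zero_rpow (by linarith : 2 * α ≠ 0)]
      · rw [← Real.rpow_add h]; ring_nf
    linear_combination (-1 / (α * (α + 1))) * key
  rw [e]
  rw [intervalIntegral.integral_div, intervalIntegral.integral_sub
      ((rpow_shift_integrable t 0 t (α - 1) hαm).const_mul _)
      (rpow_shift_integrable t 0 t (2 * α) h2α),
    intervalIntegral.integral_const_mul,
    rpow_shift_int t 0 t (α - 1) hαm,
    rpow_shift_int t 0 t (2 * α) h2α]
  rw [sub_add_cancel, sub_zero, sub_self, Real.zero_rpow hα.ne',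
    Real.zero_rpow (by linarith : 2 * α + 1 ≠ 0)]
  have key2 : t ^ (α + 1) * t ^ α = t ^ (2 * α + 1) := by
    rw [← Real.rpow_add ht]; ring_nf
  rw [Real.Gamma_add_one hα.ne']
  have hG : Gamma α ≠ 0 := (Real.Gamma_pos_of_pos hα).ne'
  have h1 : α + 1 ≠ 0 := by linarith
  have h2 : (2 : ℝ) * α + 1 ≠ 0 := by linarith
  rw [← key2]
  field_simp
  ring
end

section
/- For n ≥ 1 and 1 ≤ k ≤ n−1, the Adomian recursion coefficients satisfy (k+1)·m_{(m−k−1)}·m_{(k+1)} + (2k+1)·m_{(m−k)}·m_{(k)} + k·m_{(m−k+1)}·m_{(k−1)} = (m+1)_{(m+1−k)}·(m+1)_{(k)} for all m ≥ k, where n_{(j)} = n!/(n−j)! is the falling factorial. -/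
/-- The Adomian recursion coefficient identity for the falling factorial
`m_{(j)} = m!/(m−j)!` (`Nat.descFactorial`): for `1 ≤ k ≤ m − 1`,
`(k+1)m_{(m−k−1)}m_{(k+1)} + (2k+1)m_{(m−k)}m_{(k)} + k·m_{(m−k+1)}m_{(k−1)}
  = (m+1)_{(m+1−k)}(m+1)_{(k)}`. -/
theorem adomian_descFactorial_identity (m k : ℕ) (hk : 1 ≤ k) (hk' : k < m) :
    ((k : ℝ) + 1) * (m.descFactorial (m - k - 1) : ℝ) * (m.descFactorial (k + 1) : ℝ)
      + (2 * (k : ℝ) + 1) * (m.descFactorial (m - k) : ℝ) * (m.descFactorial k : ℝ)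
      + (k : ℝ) * (m.descFactorial (m - k + 1) : ℝ) * (m.descFactorial (k - 1) : ℝ)
    = ((m + 1).descFactorial (m + 1 - k) : ℝ) * ((m + 1).descFactorial k : ℝ) := by
  obtain ⟨i, rfl⟩ : ∃ i, k = i + 1 := ⟨k - 1, by omega⟩
  obtain ⟨j, rfl⟩ : ∃ j, m = i + j + 2 := ⟨m - i - 2, by omega⟩
  have e1 : i + j + 2 - (i + 1) - 1 = j := by omega
  have e2 : i + j + 2 - (i + 1) = j + 1 := by omega
  have e3 : i + j + 2 - (i + 1) + 1 = j + 2 := by omega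
  have e4 : i + 1 - 1 = i := by omega
  have e5 : i + j + 2 + 1 - (i + 1) = j + 2 := by omega
  rw [e1, e2, e4, e5]
  have h1 : (i + j + 2).descFactorial (j + 1) = (i + 2) * (i + j + 2).descFactorial j := by
    rw [Nat.descFactorial_succ]; congr 1 <;> omega
  have h2 : (i + j + 2).descFactorial (j + 1 + 1) =
      (i + 1) * ((i + 2) * (i + j + 2).descFactorial j) := by
    rw [Nat.descFactorial_succ, h1]; congr 1 <;> omega
  have h3 : (i + j + 2).descFactorial (i + 1) = (j + 2) * (i + j + 2).descFactorial i := by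
    rw [Nat.descFactorial_succ]; congr 1 <;> omega
  have h4 : (i + j + 2).descFactorial (i + 1 + 1) =
      (j + 1) * ((j + 2) * (i + j + 2).descFactorial i) := by
    rw [Nat.descFactorial_succ, h3]; congr 1; all_goals omega
  have h5 : (i + j + 2 + 1).descFactorial (j + 2) =
      (i + j + 3) * ((i + 2) * (i + j + 2).descFactorial j) := by
    rw [Nat.succ_descFactorial_succ, h1]
  have h6 : (i + j + 2 + 1).descFactorial (i + 1) =
      (i + j + 3) * (i + j + 2).descFactorial i := by
    rw [Nat.succ_descFactorial_succ]
  rw [h1, h2, h3, h4, h5, h6]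
  push_cast
  ring
end
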